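/- arXiv:2105.00887 — 5 statements merged into one kernel-verified Lean document; each statement's English description precedes it below -/
import Mathlib

section
/- Let f : [0,T] → V be a twice differentiable function into a normed space with ‖f'(s)‖ ≤ B₁ and ‖f''(s)‖ ≤ B₂ for all s ∈ [0,T]. Then for any h > 0 with T/h ∈ ℕ, the trapezoidal-type approximation satisfies ‖∫₀ᵀ (T−s) f(s) ds − (1/2) ∫₀ᵀ (T−s) [f(⌊s⌋) + f(⌈s⌉)] ds‖ ≤ (h²/12)(B₂ T² + B₁ T), where ⌊s⌋ = max{t ∈ hℤ : t ≤ s} and ⌈s⌉ = min{t ∈ hℤ : t ≥ s}. -/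
/-!
On a cell `[a, b]` with midpoint `m`, write `T - s = (T - m) - (s - m)`. Integrating by parts,
the error of the cell becomes `-(T - m) • ∫ (s - m) • f' s - ∫ (s - m) • f s`. Since
`∫ (s - m) = 0`, a first moment `∫ (s - m) • g s` equals `∫ (s - m) • (g s - g m)`, and when `g`
is `L`-Lipschitz it is at most `L ∫ (s - m)² = L (b - a)³ / 12`. Applying this to `g = f'`
(`L = B₂`) and `g = f` (`L = B₁`) bounds each cell by `(T B₂ + B₁) h³ / 12`; there are `T / h`
cells, and on the interior of each one `⌊s⌋` and `⌈s⌉` are its endpoints.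
-/

open MeasureTheory intervalIntegral

/-- Grid point below `t` on the grid `h·ℤ`. -/
noncomputable def gridFloor (h t : ℝ) : ℝ := h * ⌊t / h⌋

/-- Grid point above `t` on the grid `h·ℤ`. -/
noncomputable def gridCeil (h t : ℝ) : ℝ := h * ⌈t / h⌉

open Set

theorem integral_sub_midpoint (a b : ℝ) : ∫ s in a..b, (s - (a + b) / 2) = 0 := by
  rw [intervalIntegral.integral_sub intervalIntegrable_id intervalIntegrable_const, integral_id,
    intervalIntegral.integral_const, smul_eq_mul]
  ring

theorem integral_sub_midpoint_sq (a b : ℝ) :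
    ∫ s in a..b, (s - (a + b) / 2) ^ 2 = (b - a) ^ 3 / 12 := by
  rw [integral_comp_sub_right (· ^ 2), integral_pow]
  ring

theorem integral_const_sub (T a b : ℝ) :
    ∫ s in a..b, (T - s) = (T - (a + b) / 2) * (b - a) := by
  rw [intervalIntegral.integral_sub intervalIntegrable_const intervalIntegrable_id, integral_id,
    intervalIntegral.integral_const, smul_eq_mul]
  ring

theorem norm_sub_le_mul_abs_of_hasDerivAt {V : Type*} [NormedAddCommGroup V] [NormedSpace ℝ V]
    {a b B : ℝ} {f f' : ℝ → V}
    (hf : ∀ s ∈ Icc a b, HasDerivAt f (f' s) s) (hB : ∀ s ∈ Icc a b, ‖f' s‖ ≤ B)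
    {x y : ℝ} (hx : x ∈ Icc a b) (hy : y ∈ Icc a b) : ‖f y - f x‖ ≤ B * |y - x| :=
  Real.norm_eq_abs (y - x) ▸ (convex_Icc a b).norm_image_sub_le_of_norm_hasDerivWithin_le
    (fun s hs => (hf s hs).hasDerivWithinAt) hB hx hy

section Midpoint

variable {V : Type*} [NormedAddCommGroup V] [NormedSpace ℝ V] [CompleteSpace V] {a b : ℝ}

theorem norm_integral_sub_midpoint_smul_le {g : ℝ → V} {L : ℝ} (hab : a ≤ b)
    (hg : IntervalIntegrable g volume a b)
    (hL : ∀ s ∈ Icc a b, ‖g s - g ((a + b) / 2)‖ ≤ L * |s - (a + b) / 2|) :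
    ‖∫ s in a..b, (s - (a + b) / 2) • g s‖ ≤ L * (b - a) ^ 3 / 12 := by
  set m := (a + b) / 2
  have hweight : Continuous fun s : ℝ => s - m := by fun_prop
  have hcentre : ∫ s in a..b, (s - m) • g s = ∫ s in a..b, (s - m) • (g s - g m) := by
    simp_rw [smul_sub]
    rw [intervalIntegral.integral_sub (hg.continuousOn_smul hweight.continuousOn)
      ((by fun_prop : Continuous fun s : ℝ => (s - m) • g m).intervalIntegrable a b),
      intervalIntegral.integral_smul_const, integral_sub_midpoint, zero_smul, sub_zero]
  calc ‖∫ s in a..b, (s - m) • g s‖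
      ≤ ∫ s in a..b, L * (s - m) ^ 2 := by
        rw [hcentre]
        refine intervalIntegral.norm_integral_le_of_norm_le hab (ae_of_all _ fun s hs => ?_)
          ((by fun_prop : Continuous fun s : ℝ => L * (s - m) ^ 2).intervalIntegrable a b)
        rw [norm_smul, Real.norm_eq_abs, ← sq_abs, sq, mul_comm L, mul_assoc]
        exact mul_le_mul_of_nonneg_left (by linarith [hL s (Ioc_subset_Icc_self hs)])
          (abs_nonneg _)
    _ = L * (b - a) ^ 3 / 12 := by
        rw [intervalIntegral.integral_const_mul, integral_sub_midpoint_sq, mul_div_assoc]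

theorem integral_sub_trapezoid_eq {f f' : ℝ → V}
    (hf : ∀ s ∈ uIcc a b, HasDerivAt f (f' s) s) (hf' : IntervalIntegrable f' volume a b) :
    (∫ s in a..b, f s) - ((b - a) / 2) • (f a + f b) =
      -∫ s in a..b, (s - (a + b) / 2) • f' s := by
  rw [integral_smul_deriv_eq_deriv_smul (u := fun s => s - (a + b) / 2)
    (fun s _ => (hasDerivAt_id s).sub_const _) hf intervalIntegrable_const hf']
  simp only [one_smul]
  have hb : b - (a + b) / 2 = (b - a) / 2 := by ring
  have ha : a - (a + b) / 2 = -((b - a) / 2) := by ring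
  rw [hb, ha]
  module

theorem weighted_trapezoid_error_eq {T : ℝ} {f f' : ℝ → V}
    (hf : ∀ s ∈ uIcc a b, HasDerivAt f (f' s) s) (hf' : IntervalIntegrable f' volume a b) :
    (∫ s in a..b, (T - s) • f s) - (1 / 2 : ℝ) • ∫ s in a..b, (T - s) • (f a + f b) =
      -((T - (a + b) / 2) • ∫ s in a..b, (s - (a + b) / 2) • f' s) -
        ∫ s in a..b, (s - (a + b) / 2) • f s := by
  set m := (a + b) / 2
  have hfi : IntervalIntegrable f volume a b :=
    ContinuousOn.intervalIntegrable fun s hs => (hf s hs).continuousAt.continuousWithinAt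
  have hsplit : ∫ s in a..b, (T - s) • f s =
      (T - m) • (∫ s in a..b, f s) - ∫ s in a..b, (s - m) • f s := by
    rw [← intervalIntegral.integral_smul, ← intervalIntegral.integral_sub
      (hfi.continuousOn_smul continuousOn_const)
      (hfi.continuousOn_smul (by fun_prop : Continuous fun s : ℝ => s - m).continuousOn)]
    congr 1 with s
    rw [← sub_smul, sub_sub_sub_cancel_right]
  rw [hsplit, intervalIntegral.integral_smul_const, integral_const_sub,
    ← neg_eq_iff_eq_neg.mpr (integral_sub_trapezoid_eq hf hf')]
  module

theorem norm_weighted_trapezoid_error_le {T B₁ B₂ : ℝ} {f f' f'' : ℝ → V}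
    (ha : 0 ≤ a) (hab : a ≤ b) (hbT : b ≤ T)
    (hf : ∀ s ∈ Icc a b, HasDerivAt f (f' s) s) (hf' : ∀ s ∈ Icc a b, HasDerivAt f' (f'' s) s)
    (hB₁ : ∀ s ∈ Icc a b, ‖f' s‖ ≤ B₁) (hB₂ : ∀ s ∈ Icc a b, ‖f'' s‖ ≤ B₂) :
    ‖(∫ s in a..b, (T - s) • f s) - (1 / 2 : ℝ) • ∫ s in a..b, (T - s) • (f a + f b)‖ ≤
      (T * B₂ + B₁) * (b - a) ^ 3 / 12 := by
  set m := (a + b) / 2 with hm_def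
  have hm : m ∈ Icc a b := ⟨by linarith, by linarith⟩
  have hcont {g g' : ℝ → V} (hg : ∀ s ∈ Icc a b, HasDerivAt g (g' s) s) :
      IntervalIntegrable g volume a b :=
    ContinuousOn.intervalIntegrable fun s hs =>
      (hg s (uIcc_of_le hab ▸ hs)).continuousAt.continuousWithinAt
  have hmoment₂ : ‖∫ s in a..b, (s - m) • f' s‖ ≤ B₂ * (b - a) ^ 3 / 12 :=
    norm_integral_sub_midpoint_smul_le hab (hcont hf')
      fun s hs => norm_sub_le_mul_abs_of_hasDerivAt hf' hB₂ hm hs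
  have hmoment₁ : ‖∫ s in a..b, (s - m) • f s‖ ≤ B₁ * (b - a) ^ 3 / 12 :=
    norm_integral_sub_midpoint_smul_le hab (hcont hf)
      fun s hs => norm_sub_le_mul_abs_of_hasDerivAt hf hB₁ hm hs
  have hB₂_nonneg : 0 ≤ B₂ := (norm_nonneg _).trans (hB₂ a ⟨le_rfl, hab⟩)
  rw [weighted_trapezoid_error_eq (fun s hs => hf s (uIcc_of_le hab ▸ hs)) (hcont hf')]
  calc _ ≤ (T - m) * ‖∫ s in a..b, (s - m) • f' s‖ + ‖∫ s in a..b, (s - m) • f s‖ := by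
        refine (norm_sub_le _ _).trans_eq ?_
        rw [norm_neg, norm_smul, Real.norm_eq_abs, abs_of_nonneg (by linarith [hm.2])]
    _ ≤ T * (B₂ * (b - a) ^ 3 / 12) + B₁ * (b - a) ^ 3 / 12 := by
        gcongr ?_ + ?_
        calc (T - m) * ‖∫ s in a..b, (s - m) • f' s‖ ≤ (T - m) * (B₂ * (b - a) ^ 3 / 12) :=
              mul_le_mul_of_nonneg_left hmoment₂ (by linarith [hm.2])
          _ ≤ T * (B₂ * (b - a) ^ 3 / 12) := by
              have := sub_nonneg.mpr hab
              gcongr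
              linarith
    _ = (T * B₂ + B₁) * (b - a) ^ 3 / 12 := by ring

end Midpoint

section Grid

variable {V : Type*} [NormedAddCommGroup V] [NormedSpace ℝ V] {h : ℝ}

theorem gridFloor_eq_of_mem_Ioo {t : ℝ} {k : ℕ} (hh : 0 < h)
    (ht : t ∈ Ioo (k * h) ((k + 1) * h)) : gridFloor h t = k * h := by
  have hk : ⌊t / h⌋ = k := by
    rw [Int.floor_eq_iff, le_div_iff₀ hh, div_lt_iff₀ hh]
    push_cast
    exact ⟨ht.1.le, ht.2⟩
  rw [gridFloor, hk, mul_comm, Int.cast_natCast]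

theorem gridCeil_eq_of_mem_Ioo {t : ℝ} {k : ℕ} (hh : 0 < h)
    (ht : t ∈ Ioo (k * h) ((k + 1) * h)) : gridCeil h t = (k + 1) * h := by
  have hk : ⌈t / h⌉ = k + 1 := by
    rw [Int.ceil_eq_iff, lt_div_iff₀ hh, div_le_iff₀ hh]
    push_cast
    exact ⟨by simpa using ht.1, ht.2.le⟩
  rw [gridCeil, hk, mul_comm]
  push_cast
  ring

theorem eqOn_grid_cell (hh : 0 < h) (k : ℕ) (w : ℝ → ℝ) (f : ℝ → V) :
    EqOn (fun s => w s • (f (k * h) + f ((k + 1) * h)))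
      (fun s => w s • (f (gridFloor h s) + f (gridCeil h s))) (Ioo (k * h) ((k + 1) * h)) :=
  fun s hs => by simp only [gridFloor_eq_of_mem_Ioo hh hs, gridCeil_eq_of_mem_Ioo hh hs]

theorem integral_eq_sum_integral_grid {F : ℝ → V} (N : ℕ)
    (hF : ∀ k < N, IntervalIntegrable F volume (k * h) ((k + 1) * h)) :
    ∫ s in (0 : ℝ)..N * h, F s = ∑ k ∈ Finset.range N, ∫ s in k * h..(k + 1) * h, F s := by
  have := sum_integral_adjacent_intervals (a := fun k : ℕ => k * h) (μ := volume) (f := F)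
    (by simpa using hF)
  simpa using this.symm

theorem intervalIntegrable_grid_cell (hh : 0 < h) (k : ℕ) {w : ℝ → ℝ} (hw : Continuous w)
    (f : ℝ → V) :
    IntervalIntegrable (fun s => w s • (f (gridFloor h s) + f (gridCeil h s))) volume
      (k * h) ((k + 1) * h) := by
  have hcell : (k : ℝ) * h ≤ (k + 1) * h := by gcongr; linarith
  exact ((hw.smul continuous_const).intervalIntegrable _ _).congr_uIoo
    (uIoo_of_le hcell ▸ eqOn_grid_cell hh k w f)

theorem norm_grid_cell_error_le [CompleteSpace V] {T B₁ B₂ : ℝ} {f f' f'' : ℝ → V}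
    (hh : 0 < h) (k : ℕ) (hkT : (k + 1) * h ≤ T)
    (hf : ∀ s ∈ Icc (k * h) ((k + 1) * h), HasDerivAt f (f' s) s)
    (hf' : ∀ s ∈ Icc (k * h) ((k + 1) * h), HasDerivAt f' (f'' s) s)
    (hB₁ : ∀ s ∈ Icc (k * h) ((k + 1) * h), ‖f' s‖ ≤ B₁)
    (hB₂ : ∀ s ∈ Icc (k * h) ((k + 1) * h), ‖f'' s‖ ≤ B₂) :
    ‖(∫ s in k * h..(k + 1) * h, (T - s) • f s) -
        (1 / 2 : ℝ) • ∫ s in k * h..(k + 1) * h, (T - s) • (f (gridFloor h s) + f (gridCeil h s))‖ ≤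
      (T * B₂ + B₁) * h ^ 3 / 12 := by
  have hcell : (k : ℝ) * h ≤ (k + 1) * h := by gcongr; linarith
  have hlen : ((k : ℝ) + 1) * h - k * h = h := by ring
  rw [← integral_congr_Ioo_of_le hcell (eqOn_grid_cell hh k (T - ·) f)]
  refine (norm_weighted_trapezoid_error_le (by positivity) hcell hkT hf hf' hB₁ hB₂).trans_eq ?_
  rw [hlen]

end Grid

theorem trapezoid_error_general
    {V : Type*} [NormedAddCommGroup V] [NormedSpace ℝ V] [CompleteSpace V]
    (T h B₁ B₂ : ℝ) (hh : 0 < h) (N : ℕ) (hTh : T = N * h)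
    (f f' f'' : ℝ → V)
    (hf : ∀ s ∈ Set.Icc (0:ℝ) T, HasDerivAt f (f' s) s)
    (hf' : ∀ s ∈ Set.Icc (0:ℝ) T, HasDerivAt f' (f'' s) s)
    (hB₁ : ∀ s ∈ Set.Icc (0:ℝ) T, ‖f' s‖ ≤ B₁)
    (hB₂ : ∀ s ∈ Set.Icc (0:ℝ) T, ‖f'' s‖ ≤ B₂) :
    ‖(∫ s in (0:ℝ)..T, (T - s) • f s) -
        (1/2 : ℝ) • ∫ s in (0:ℝ)..T, (T - s) • (f (gridFloor h s) + f (gridCeil h s))‖ ≤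
      h^2 / 12 * (B₂ * T^2 + B₁ * T) := by
  have hcell_le (k : ℕ) : (k : ℝ) * h ≤ (k + 1) * h := by gcongr; linarith
  have hcell_end : ∀ k < N, ((k : ℝ) + 1) * h ≤ T := fun k hk => by
    rw [hTh]; gcongr; exact_mod_cast hk
  have hcell : ∀ k < N, Icc (k * h) ((k + 1) * h) ⊆ Icc 0 T := fun k hk =>
    Icc_subset_Icc (by positivity) (hcell_end k hk)
  have hsplit (F : ℝ → V) (hF : ∀ k < N, IntervalIntegrable F volume (k * h) ((k + 1) * h)) :
      ∫ s in (0 : ℝ)..T, F s = ∑ k ∈ Finset.range N, ∫ s in k * h..(k + 1) * h, F s :=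
    hTh ▸ integral_eq_sum_integral_grid N hF
  have hexact : ∀ k < N, IntervalIntegrable (fun s => (T - s) • f s) volume (k * h) ((k + 1) * h) :=
    fun k hk => ContinuousOn.intervalIntegrable fun s hs =>
      (continuousAt_const.sub continuousAt_id).smul
        (hf s (hcell k hk (uIcc_of_le (hcell_le k) ▸ hs))).continuousAt |>.continuousWithinAt
  rw [hsplit _ hexact, hsplit _ fun k _ => intervalIntegrable_grid_cell hh k (by fun_prop) f,
    Finset.smul_sum, ← Finset.sum_sub_distrib]
  calc _ ≤ ∑ k ∈ Finset.range N, (T * B₂ + B₁) * h ^ 3 / 12 := by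
        refine (norm_sum_le _ _).trans (Finset.sum_le_sum fun k hk => ?_)
        have hk := Finset.mem_range.mp hk
        exact norm_grid_cell_error_le hh k (hcell_end k hk) (fun s hs => hf s (hcell k hk hs))
          (fun s hs => hf' s (hcell k hk hs)) (fun s hs => hB₁ s (hcell k hk hs))
          (fun s hs => hB₂ s (hcell k hk hs))
    _ = h ^ 2 / 12 * (B₂ * T ^ 2 + B₁ * T) := by
        rw [Finset.sum_const, Finset.card_range, nsmul_eq_mul, hTh]
        ring

/-- Trapezoidal-type quadrature error bound (Lemma `trapz`). -/
theorem trapezoid_error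
    {V : Type*} [NormedAddCommGroup V] [NormedSpace ℝ V] [CompleteSpace V]
    (T h B₁ B₂ : ℝ) (hT : 0 < T) (hh : 0 < h) (N : ℕ) (hN : 0 < N) (hTh : T = N * h)
    (f f' f'' : ℝ → V)
    (hf : ∀ s ∈ Set.Icc (0:ℝ) T, HasDerivAt f (f' s) s)
    (hf' : ∀ s ∈ Set.Icc (0:ℝ) T, HasDerivAt f' (f'' s) s)
    (hB₁ : ∀ s ∈ Set.Icc (0:ℝ) T, ‖f' s‖ ≤ B₁)
    (hB₂ : ∀ s ∈ Set.Icc (0:ℝ) T, ‖f'' s‖ ≤ B₂) :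
    ‖(∫ s in (0:ℝ)..T, (T - s) • f s) -
        (1/2 : ℝ) • ∫ s in (0:ℝ)..T, (T - s) • (f (gridFloor h s) + f (gridCeil h s))‖ ≤
      h^2 / 12 * (B₂ * T^2 + B₁ * T) :=
  trapezoid_error_general T h B₁ B₂ hh N hTh f f' f'' hf hf' hB₁ hB₂
end

section
/- Let A be a d×d real matrix with ‖A − I_d‖ ≤ 1/2 in operator norm (so the spectral radius of A − I_d is at most 1/2). Then trace(A − I_d) − log|det A| ≤ (‖A − I_d‖_F²/2)/(1 − ‖A − I_d‖) ≤ ‖A − I_d‖_F². -/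
/-!
Write `A = 1 + E` and `f s = s * tr E - log det (1 + s • E)` for `s ∈ [0, 1]`. Jacobi's formula gives
`f' s = tr E - tr ((1 + s • E)⁻¹ E) = s * tr ((1 + s • E)⁻¹ E E)`. By Cauchy–Schwarz for the
Frobenius inner product, `tr (P E E) ≤ ‖P‖ ‖E‖_F²`, and the Neumann series gives
`‖(1 + s • E)⁻¹‖ ≤ 1 / (1 - ‖E‖)`, so `f' s ≤ s ‖E‖_F² / (1 - ‖E‖)`; integrating over `[0, 1]`
gives the first inequality, and `1 - ‖E‖ ≥ 1 / 2` the second. As `Real.log` is even, no sign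
argument for `det A` is needed.
-/

open Matrix

/-- Operator norm of a `d × d` real matrix, acting on Euclidean space. -/
noncomputable def matOpNorm {d : ℕ} (A : Matrix (Fin d) (Fin d) ℝ) : ℝ :=
  ‖Matrix.toEuclideanCLM (𝕜 := ℝ) A‖

/-- Frobenius norm of a `d × d` real matrix. -/
noncomputable def matFrobNorm {d : ℕ} (A : Matrix (Fin d) (Fin d) ℝ) : ℝ :=
  Real.sqrt (∑ i : Fin d, ∑ j : Fin d, (A i j)^2)

open scoped Matrix.Norms.L2Operator

theorem image_sub_le_of_hasDerivAt_le_mul {f f' : ℝ → ℝ} {C : ℝ}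
    (hf : ∀ t ∈ Set.Icc (0 : ℝ) 1, HasDerivAt f (f' t) t)
    (hf' : ∀ t ∈ Set.Icc (0 : ℝ) 1, f' t ≤ C * t) : f 1 - f 0 ≤ C / 2 := by
  have hg : ∀ t ∈ Set.Icc (0 : ℝ) 1,
      HasDerivAt (fun t => C / 2 * t ^ 2 - f t) (C * t - f' t) t := fun t ht =>
    (((hasDerivAt_pow 2 t).const_mul (C / 2)).fun_sub (hf t ht)).congr_deriv (by ring)
  have hmono : MonotoneOn (fun t => C / 2 * t ^ 2 - f t) (Set.Icc 0 1) :=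
    monotoneOn_of_hasDerivWithinAt_nonneg (convex_Icc 0 1)
      (fun t ht => (hg t ht).continuousAt.continuousWithinAt)
      (fun t ht => (hg t (interior_subset ht)).hasDerivWithinAt)
      (fun t ht => sub_nonneg.2 (hf' t (interior_subset ht)))
  have := hmono (Set.left_mem_Icc.2 zero_le_one) (Set.right_mem_Icc.2 zero_le_one) zero_le_one
  simp only at this
  linarith

theorem NormedRing.norm_inverse_one_sub_le {R : Type*} [NormedRing R] [HasSummableGeomSeries R]
    {x : R} (hx : ‖x‖ < 1) (h1 : ‖(1 : R)‖ ≤ 1) : ‖Ring.inverse (1 - x)‖ ≤ (1 - ‖x‖)⁻¹ := by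
  rw [← geom_series_eq_inverse x hx]
  linarith [tsum_geometric_le_of_norm_lt_one x hx]

namespace Matrix

variable {n : Type*} [Fintype n]

theorem trace_mul_sq_le (P Q : Matrix n n ℝ) :
    trace (P * Q) ^ 2 ≤ (∑ i, ∑ j, P i j ^ 2) * ∑ i, ∑ j, Q i j ^ 2 := by
  have h := Finset.sum_mul_sq_le_sq_mul_sq Finset.univ
    (fun p : n × n => P p.1 p.2) (fun p => Q p.2 p.1)
  simp only [Fintype.sum_prod_type] at h
  rwa [Finset.sum_comm (f := fun i j => Q j i ^ 2)] at h

variable [DecidableEq n]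

theorem l2_opNorm_one_le : ‖(1 : Matrix n n ℝ)‖ ≤ 1 := by
  rw [cstar_norm_def, map_one]
  exact ContinuousLinearMap.norm_id_le

theorem isUnit_det_one_add_of_l2_opNorm_lt_one {B : Matrix n n ℝ} (hB : ‖B‖ < 1) :
    IsUnit (1 + B).det := by
  rw [← isUnit_iff_isUnit_det, ← sub_neg_eq_add]
  exact isUnit_one_sub_of_norm_lt_one (by rwa [norm_neg])

theorem l2_opNorm_inv_one_add_le {B : Matrix n n ℝ} (hB : ‖B‖ < 1) :
    ‖(1 + B)⁻¹‖ ≤ (1 - ‖B‖)⁻¹ := by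
  rw [nonsing_inv_eq_ringInverse, ← sub_neg_eq_add, ← norm_neg B]
  exact NormedRing.norm_inverse_one_sub_le (by rwa [norm_neg]) l2_opNorm_one_le

theorem sum_sq_mulVec_le (P : Matrix n n ℝ) (v : n → ℝ) :
    ∑ i, (P *ᵥ v) i ^ 2 ≤ ‖P‖ ^ 2 * ∑ i, v i ^ 2 := by
  calc ∑ i, (P *ᵥ v) i ^ 2 = ‖WithLp.toLp 2 (P *ᵥ v)‖ ^ 2 := by
        rw [EuclideanSpace.real_norm_sq_eq]
    _ ≤ (‖P‖ * ‖WithLp.toLp 2 v‖) ^ 2 := by gcongr; exact P.l2_opNorm_mulVec (WithLp.toLp 2 v)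
    _ = ‖P‖ ^ 2 * ∑ i, v i ^ 2 := by rw [mul_pow, EuclideanSpace.real_norm_sq_eq]

theorem sum_sq_mul_le (P Q : Matrix n n ℝ) :
    ∑ i, ∑ j, (P * Q) i j ^ 2 ≤ ‖P‖ ^ 2 * ∑ i, ∑ j, Q i j ^ 2 := by
  rw [Finset.sum_comm, Finset.sum_comm (f := fun i j => Q i j ^ 2), Finset.mul_sum]
  exact Finset.sum_le_sum fun j _ => sum_sq_mulVec_le P (fun k => Q k j)

theorem trace_mul_mul_self_le (P E : Matrix n n ℝ) :
    trace (P * E * E) ≤ ‖P‖ * ∑ i, ∑ j, E i j ^ 2 := by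
  set F := ∑ i, ∑ j, E i j ^ 2
  have hF : 0 ≤ F := by positivity
  have h : trace (P * E * E) ^ 2 ≤ (‖P‖ * F) ^ 2 := by
    calc trace (P * E * E) ^ 2 ≤ (∑ i, ∑ j, (P * E) i j ^ 2) * F := trace_mul_sq_le _ _
      _ ≤ ‖P‖ ^ 2 * F * F := by gcongr; exact sum_sq_mul_le P E
      _ = (‖P‖ * F) ^ 2 := by ring
  exact le_of_sq_le_sq h (by positivity)

open Polynomial in
theorem hasDerivAt_det_one_add_smul_zero {𝕜 : Type*} [NontriviallyNormedField 𝕜]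
    (M : Matrix n n 𝕜) :
    HasDerivAt (fun s : 𝕜 => det (1 + s • M)) (trace M) 0 := by
  have h := (det (1 + (X : 𝕜[X]) • M.map C)).hasDerivAt 0
  rw [derivative_det_one_add_X_smul] at h
  convert h using 2 with s
  simp [eval_det, ← smul_eq_mul_diagonal]

theorem hasDerivAt_det_add_smul {𝕜 : Type*} [NontriviallyNormedField 𝕜]
    (A B : Matrix n n 𝕜) {t : 𝕜} (ht : IsUnit (A + t • B).det) :
    HasDerivAt (fun s : 𝕜 => det (A + s • B))
      (det (A + t • B) * trace ((A + t • B)⁻¹ * B)) t := by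
  set A₀ := A + t • B
  have h : HasDerivAt (fun s : 𝕜 => det A₀ * det (1 + s • (A₀⁻¹ * B)))
      (det A₀ * trace (A₀⁻¹ * B)) (t - t) := by
    rw [sub_self]
    exact (hasDerivAt_det_one_add_smul_zero _).const_mul _
  have hfun : (fun s => det (A + s • B)) = fun s => det A₀ * det (1 + (s - t) • (A₀⁻¹ * B)) := by
    funext s
    rw [← det_mul, mul_add, mul_one, mul_smul_comm, mul_nonsing_inv_cancel_left _ _ ht, add_assoc,
      ← add_smul, add_sub_cancel]
  rw [hfun]
  exact h.comp_sub_const t t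

theorem hasDerivAt_log_det_add_smul (A B : Matrix n n ℝ) {t : ℝ}
    (ht : IsUnit (A + t • B).det) :
    HasDerivAt (fun s : ℝ => Real.log (det (A + s • B))) (trace ((A + t • B)⁻¹ * B)) t := by
  convert (hasDerivAt_det_add_smul A B ht).log ht.ne_zero using 1
  field_simp [ht.ne_zero]


theorem trace_sub_trace_inv_one_add_smul_mul {E : Matrix n n ℝ} {t : ℝ}
    (ht : IsUnit (1 + t • E).det) :
    trace E - trace ((1 + t • E)⁻¹ * E) = t * trace ((1 + t • E)⁻¹ * E * E) := by
  have h : E = (1 + t • E)⁻¹ * E + t • ((1 + t • E)⁻¹ * E * E) := by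
    conv_lhs => rw [← one_mul E, ← nonsing_inv_mul _ ht]
    rw [mul_assoc, add_mul, one_mul, smul_mul_assoc, mul_add, mul_smul_comm, mul_assoc]
  conv_lhs => arg 1; rw [h]
  rw [trace_add, trace_smul, smul_eq_mul, add_sub_cancel_left]

theorem trace_sub_log_det_one_add_le {E : Matrix n n ℝ} (hE : ‖E‖ < 1) :
    trace E - Real.log (det (1 + E)) ≤ (∑ i, ∑ j, E i j ^ 2) / 2 / (1 - ‖E‖) := by
  set F := ∑ i, ∑ j, E i j ^ 2
  have hsmul : ∀ t ∈ Set.Icc (0 : ℝ) 1, ‖t • E‖ ≤ ‖E‖ := fun t ht => by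
    rw [norm_smul, Real.norm_of_nonneg ht.1]
    exact mul_le_of_le_one_left (norm_nonneg E) ht.2
  have hunit t (ht : t ∈ Set.Icc (0 : ℝ) 1) : IsUnit (1 + t • E).det :=
    isUnit_det_one_add_of_l2_opNorm_lt_one ((hsmul t ht).trans_lt hE)
  have hderiv : ∀ t ∈ Set.Icc (0 : ℝ) 1,
      HasDerivAt (fun s => s * trace E - Real.log (det (1 + s • E)))
        (trace E - trace ((1 + t • E)⁻¹ * E)) t := fun t ht => by
    simpa using ((hasDerivAt_id' t).mul_const (trace E)).fun_sub
      (hasDerivAt_log_det_add_smul 1 E (hunit t ht))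
  have hbound : ∀ t ∈ Set.Icc (0 : ℝ) 1,
      trace E - trace ((1 + t • E)⁻¹ * E) ≤ F / (1 - ‖E‖) * t := fun t ht => by
    have hinv : ‖(1 + t • E)⁻¹‖ ≤ (1 - ‖E‖)⁻¹ :=
      (l2_opNorm_inv_one_add_le ((hsmul t ht).trans_lt hE)).trans
        (inv_anti₀ (by linarith) (by linarith [hsmul t ht]))
    rw [trace_sub_trace_inv_one_add_smul_mul (hunit t ht), mul_comm]
    gcongr
    · exact ht.1
    calc trace ((1 + t • E)⁻¹ * E * E) ≤ ‖(1 + t • E)⁻¹‖ * F := trace_mul_mul_self_le _ _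
      _ ≤ (1 - ‖E‖)⁻¹ * F := by gcongr
      _ = F / (1 - ‖E‖) := by ring
  have h := image_sub_le_of_hasDerivAt_le_mul hderiv hbound
  simp only [zero_smul, add_zero, det_one, Real.log_one, one_smul, zero_mul, one_mul,
    sub_zero] at h
  rwa [div_right_comm]

end Matrix

theorem matOpNorm_eq_l2_opNorm {d : ℕ} (A : Matrix (Fin d) (Fin d) ℝ) : matOpNorm A = ‖A‖ := rfl

theorem matFrobNorm_sq {d : ℕ} (A : Matrix (Fin d) (Fin d) ℝ) :
    matFrobNorm A ^ 2 = ∑ i, ∑ j, A i j ^ 2 :=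
  Real.sq_sqrt (by positivity)

/-- Trace–log-determinant estimate for near-identity matrices
(Theorem 1.1 of Rump 2018 as used in the paper). -/
theorem trace_log_det_bound {d : ℕ} (A : Matrix (Fin d) (Fin d) ℝ)
    (hA : matOpNorm (A - 1) ≤ 1/2) :
    Matrix.trace (A - 1) - Real.log |A.det| ≤
        (matFrobNorm (A - 1))^2 / 2 / (1 - matOpNorm (A - 1)) ∧
      (matFrobNorm (A - 1))^2 / 2 / (1 - matOpNorm (A - 1)) ≤ (matFrobNorm (A - 1))^2 := by
  rw [matOpNorm_eq_l2_opNorm] at hA ⊢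
  refine ⟨?_, ?_⟩
  · have h := trace_sub_log_det_one_add_le (E := A - 1) (by linarith)
    rwa [add_sub_cancel, ← Real.log_abs, ← matFrobNorm_sq] at h
  · rw [div_div]
    exact div_le_self (sq_nonneg _) (by linarith)
end

section
/- Let U ∈ C²(ℝ^d) with ‖D²U‖ ≤ L (operator norm). Fix T > 0, h > 0 with T/h ∈ ℕ and L T² ≤ (2/5)π². Then for any endpoints a, b ∈ ℝ^d, the discrete action sum S_h(q̃) = Σ_{k=0}^{N−1} L_h(q̃_{t_k}, q̃_{t_{k+1}}), with discrete Lagrangian L_h(x,y) = (h/2)(‖y − x‖²/h² − U(y) − U(x)), is strongly convex on the space of discrete paths q̃ : {kh}_{k=0}^N → ℝ^d with q̃_0 = a and q̃_T = b. In particular, D²S_h(q̃)(u,u) ≥ ((2/5)(π²/T²) − L) Σ_{k=1}^{N−1} h‖u_{t_k}‖² for all variations u vanishing at the endpoints. -/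
/-!
The potential term is at most `L h Σ ‖u_k‖²` because `‖D²U‖ ≤ L`, so everything rests on a
discrete Poincaré inequality for the kinetic term `S = Σ ‖u_{k+1} - u_k‖²`. Telescoping from
both endpoints and Cauchy–Schwarz give `‖u_k‖² ≤ k S₁` and `‖u_k‖² ≤ (N - k) S₂` with
`S₁ + S₂ = S`, hence `N ‖u_k‖² ≤ k (N - k) S ≤ N² S / 4`. Summing over the `N - 1` interior
nodes, `4 Σ ‖u_k‖² ≤ N² S`. The constant `4` is cruder than the sharp `4 N² sin²(π / 2N)`,
but it still dominates the `(2/5) π²` that the estimate asks for.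
-/

open Finset Real

theorem two_fifths_mul_pi_sq_le_four : 2 / 5 * π ^ 2 ≤ 4 := by
  nlinarith [pi_lt_d2, pi_pos]

section DiscretePoincare

variable {E : Type*} [SeminormedAddCommGroup E]

theorem norm_sum_sq_le_card_mul_sum_norm_sq {ι : Type*} (s : Finset ι) (f : ι → E) :
    ‖∑ i ∈ s, f i‖ ^ 2 ≤ #s * ∑ i ∈ s, ‖f i‖ ^ 2 :=
  calc ‖∑ i ∈ s, f i‖ ^ 2 ≤ (∑ i ∈ s, ‖f i‖) ^ 2 := by gcongr; exact norm_sum_le s f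
    _ ≤ #s * ∑ i ∈ s, ‖f i‖ ^ 2 := sq_sum_le_card_mul_sum_sq

theorem norm_sub_sq_le_mul_sum_norm_sub_sq (u : ℕ → E) {m n : ℕ} (hmn : m ≤ n) :
    ‖u n - u m‖ ^ 2 ≤ (n - m : ℝ) * ∑ j ∈ Ico m n, ‖u (j + 1) - u j‖ ^ 2 := by
  have := norm_sum_sq_le_card_mul_sum_norm_sq (Ico m n) fun j ↦ u (j + 1) - u j
  rwa [sum_Ico_sub u hmn, Nat.card_Ico, Nat.cast_sub hmn] at this

variable {u : ℕ → E} {N : ℕ}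

theorem four_mul_norm_sq_le (hu0 : u 0 = 0) (huN : u N = 0) {k : ℕ} (hk : k ∈ Ioo 0 N) :
    4 * ‖u k‖ ^ 2 ≤ N * ∑ j ∈ range N, ‖u (j + 1) - u j‖ ^ 2 := by
  obtain ⟨hk0, hkN⟩ := mem_Ioo.mp hk
  set S₁ := ∑ j ∈ range k, ‖u (j + 1) - u j‖ ^ 2
  set S₂ := ∑ j ∈ Ico k N, ‖u (j + 1) - u j‖ ^ 2
  have hleft : ‖u k‖ ^ 2 ≤ k * S₁ := by
    simpa [hu0] using norm_sub_sq_le_mul_sum_norm_sub_sq u (Nat.zero_le k)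
  have hright : ‖u k‖ ^ 2 ≤ (N - k) * S₂ := by
    simpa [huN] using norm_sub_sq_le_mul_sum_norm_sub_sq u hkN.le
  have hsplit : S₁ + S₂ = ∑ j ∈ range N, ‖u (j + 1) - u j‖ ^ 2 :=
    sum_range_add_sum_Ico _ hkN.le
  have hS₁ : 0 ≤ S₁ := sum_nonneg fun _ _ ↦ sq_nonneg _
  have hS₂ : 0 ≤ S₂ := sum_nonneg fun _ _ ↦ sq_nonneg _
  have hkR : (0 : ℝ) < k := by exact_mod_cast hk0
  have hkNR : (k : ℝ) < N := by exact_mod_cast hkN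
  -- `N ‖u_k‖² = (N - k) ‖u_k‖² + k ‖u_k‖² ≤ k (N - k) (S₁ + S₂)`, and `4 k (N - k) ≤ N²`.
  have hweighted : (N : ℝ) * ‖u k‖ ^ 2 ≤ k * (N - k) * (S₁ + S₂) := by
    nlinarith [mul_le_mul_of_nonneg_left hleft (sub_nonneg.mpr hkNR.le),
      mul_le_mul_of_nonneg_left hright hkR.le]
  rw [← hsplit]
  nlinarith [mul_nonneg (add_nonneg hS₁ hS₂) (sq_nonneg ((N : ℝ) - 2 * k))]

theorem four_mul_sum_norm_sq_le (hu0 : u 0 = 0) (huN : u N = 0) :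
    4 * ∑ k ∈ Ioo 0 N, ‖u k‖ ^ 2 ≤ N ^ 2 * ∑ j ∈ range N, ‖u (j + 1) - u j‖ ^ 2 := by
  set S := ∑ j ∈ range N, ‖u (j + 1) - u j‖ ^ 2
  have hcard : (#(Ioo 0 N) : ℝ) ≤ N := by simp
  calc 4 * ∑ k ∈ Ioo 0 N, ‖u k‖ ^ 2 = ∑ k ∈ Ioo 0 N, 4 * ‖u k‖ ^ 2 := mul_sum ..
    _ ≤ ∑ _k ∈ Ioo 0 N, N * S := sum_le_sum fun k hk ↦ four_mul_norm_sq_le hu0 huN hk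
    _ = #(Ioo 0 N) * (N * S) := by rw [sum_const, nsmul_eq_mul]
    _ ≤ N * (N * S) := mul_le_mul_of_nonneg_right hcard (by positivity)
    _ = N ^ 2 * S := by ring

theorem discrete_poincare (hu0 : u 0 = 0) (huN : u N = 0) {h T : ℝ} (hh : 0 < h)
    (hT : T = N * h) :
    2 / 5 * (π ^ 2 / T ^ 2) * ∑ k ∈ Ioo 0 N, h * ‖u k‖ ^ 2 ≤
      (∑ j ∈ range N, ‖u (j + 1) - u j‖ ^ 2) / h := by
  rcases N.eq_zero_or_pos with rfl | hN
  · simp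
  have hNh : (0 : ℝ) < N ^ 2 * h := by positivity
  calc 2 / 5 * (π ^ 2 / T ^ 2) * ∑ k ∈ Ioo 0 N, h * ‖u k‖ ^ 2
      = 2 / 5 * π ^ 2 * (∑ k ∈ Ioo 0 N, ‖u k‖ ^ 2) / (N ^ 2 * h) := by
        rw [hT, ← mul_sum]; field_simp
    _ ≤ 4 * (∑ k ∈ Ioo 0 N, ‖u k‖ ^ 2) / (N ^ 2 * h) := by
        gcongr; exact two_fifths_mul_pi_sq_le_four
    _ ≤ N ^ 2 * (∑ j ∈ range N, ‖u (j + 1) - u j‖ ^ 2) / (N ^ 2 * h) :=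
        div_le_div_of_nonneg_right (four_mul_sum_norm_sq_le hu0 huN) hNh.le
    _ = (∑ j ∈ range N, ‖u (j + 1) - u j‖ ^ 2) / h :=
        mul_div_mul_left _ _ (by positivity)

end DiscretePoincare

theorem ContinuousLinearMap.apply_self_le_opNorm_mul_sq {E : Type*} [SeminormedAddCommGroup E]
    [NormedSpace ℝ E] (B : E →L[ℝ] E →L[ℝ] ℝ) (x : E) : B x x ≤ ‖B‖ * ‖x‖ ^ 2 :=
  calc B x x ≤ ‖B x x‖ := le_abs_self _
    _ ≤ ‖B‖ * ‖x‖ * ‖x‖ := B.le_opNorm₂ x x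
    _ = ‖B‖ * ‖x‖ ^ 2 := by ring

theorem discrete_action_strongly_convex_general {d : ℕ}
    (U'' : EuclideanSpace ℝ (Fin d) →
      (EuclideanSpace ℝ (Fin d) →L[ℝ] EuclideanSpace ℝ (Fin d) →L[ℝ] ℝ))
    (L T h : ℝ) (N : ℕ)
    (hL : ∀ x, ‖U'' x‖ ≤ L)
    (hh : 0 < h) (hTh : T = N * h)
    (q : ℕ → EuclideanSpace ℝ (Fin d))
    (u : ℕ → EuclideanSpace ℝ (Fin d)) (hu0 : u 0 = 0) (huN : u N = 0) :
    ((2/5) * (π^2 / T^2) - L) * ∑ k ∈ Finset.Ioo 0 N, h * ‖u k‖^2 ≤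
      (∑ k ∈ Finset.range N, ‖u (k+1) - u k‖^2 / h) -
        h * ∑ k ∈ Finset.Ioo 0 N, U'' (q k) (u k) (u k) := by
  have hkinetic := discrete_poincare hu0 huN hh hTh
  have hpotential :
      h * ∑ k ∈ Ioo 0 N, U'' (q k) (u k) (u k) ≤ L * ∑ k ∈ Ioo 0 N, h * ‖u k‖ ^ 2 := by
    rw [mul_sum, mul_sum]
    refine sum_le_sum fun k _ ↦ ?_
    calc h * U'' (q k) (u k) (u k) ≤ h * (L * ‖u k‖ ^ 2) := by
          gcongr
          exact ((U'' (q k)).apply_self_le_opNorm_mul_sq (u k)).trans (by gcongr; exact hL _)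
      _ = L * (h * ‖u k‖ ^ 2) := by ring
  rw [← sum_div, sub_mul]
  linarith

/-- Strong convexity of the discrete action sum of velocity Verlet
(Müller & Ortiz 2004): the second variation
`D²S_h(q̃)(u,u) = Σ_{k<N} ‖u_{k+1} − u_k‖²/h − h Σ_{0<k<N} D²U(q̃_k)(u_k,u_k)`
is bounded below by `((2/5)π²/T² − L) Σ_{0<k<N} h‖u_k‖²` for variations `u`
vanishing at the endpoints. -/
theorem discrete_action_strongly_convex {d : ℕ}
    (U : EuclideanSpace ℝ (Fin d) → ℝ)
    (U' : EuclideanSpace ℝ (Fin d) → (EuclideanSpace ℝ (Fin d) →L[ℝ] ℝ))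
    (U'' : EuclideanSpace ℝ (Fin d) →
      (EuclideanSpace ℝ (Fin d) →L[ℝ] EuclideanSpace ℝ (Fin d) →L[ℝ] ℝ))
    (L T h : ℝ) (N : ℕ)
    (hU' : ∀ x, HasFDerivAt U (U' x) x)
    (hU'' : ∀ x, HasFDerivAt U' (U'' x) x)
    (hL : ∀ x, ‖U'' x‖ ≤ L)
    (hh : 0 < h) (hN : 0 < N) (hTh : T = N * h)
    (hLT : L * T^2 ≤ (2/5) * π^2)
    (a b : EuclideanSpace ℝ (Fin d))
    (q : ℕ → EuclideanSpace ℝ (Fin d)) (hqa : q 0 = a) (hqb : q N = b)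
    (u : ℕ → EuclideanSpace ℝ (Fin d)) (hu0 : u 0 = 0) (huN : u N = 0) :
    ((2/5) * (π^2 / T^2) - L) * ∑ k ∈ Finset.Ioo 0 N, h * ‖u k‖^2 ≤
      (∑ k ∈ Finset.range N, ‖u (k+1) - u k‖^2 / h) -
        h * ∑ k ∈ Finset.Ioo 0 N, U'' (q k) (u k) (u k) :=
  discrete_action_strongly_convex_general U'' L T h N hL hh hTh q u hu0 huN
end

section
/- Let U ∈ C²(ℝ^d) with ‖D²U‖ ≤ L, and let (q̃_t, ṽ_t)(x,v) be the continuous-time interpolation of velocity Verlet with step h and duration T, satisfying L(T² + Th) ≤ 1/6 and T/h ∈ ℕ. Then for all x, y, u, v ∈ ℝ^d: max_{s ≤ T} ‖q̃_s(x,u) − q̃_s(y,v)‖ ≤ (1 + L(T² + Th)) max(‖x − y‖, ‖x − y + T(u − v)‖). -/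
/-!
Write `m = max ‖x - y‖ ‖x - y + T (u - v)‖` and let `M` bound the position deviation at the grid
points of `[0, T]`. Both trajectories feel forces sampled only at grid points, so by the Lipschitz
bound on `∇U` the force deviation there is at most `L M`. Integrating the velocity equation, the
velocity deviation drifts from `u - v` by at most `L M t`; integrating the position equation, the
position deviation stays within `L M t² / 2` of the free motion `x - y + t (u - v)`, whose norm is
at most `m` by convexity. Applied at the grid points this gives `M ≤ m + (L T² / 2) M`, hence
`M ≤ 2 m` since `L T² ≤ 1`, and so the deviation at any time is at most `(1 + L T²) m`.
-/

open MeasureTheory intervalIntegral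

theorem norm_add_smul_le_max {E : Type*} [NormedAddCommGroup E] [NormedSpace ℝ E]
    (p q : E) {t T : ℝ} (ht : t ∈ Set.Icc 0 T) :
    ‖p + t • q‖ ≤ max ‖p‖ ‖p + T • q‖ := by
  have hconv := (convexOn_norm convex_univ).comp_affineMap
    (AffineMap.lineMap p (p + q) : ℝ →ᵃ[ℝ] E)
  have := hconv.le_on_segment (Set.mem_univ 0) (Set.mem_univ T)
    (by rwa [segment_eq_Icc (ht.1.trans ht.2)] : t ∈ segment ℝ 0 T)
  simpa [AffineMap.lineMap_apply, add_comm] using this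

theorem Monotone.intervalIntegrable_comp {E : Type*} [NormedAddCommGroup E]
    {ι : ℝ → ℤ} (hι : Monotone ι) (f : ℤ → E) (a b : ℝ) :
    IntervalIntegrable (fun s => f (ι s)) volume a b := by
  have hmeas : AEStronglyMeasurable (fun s => f (ι s)) (volume.restrict (Set.uIoc a b)) :=
    (StronglyMeasurable.of_discrete.comp_measurable hι.measurable).aestronglyMeasurable
  rw [intervalIntegrable_iff]
  refine Integrable.mono'
    (integrableOn_const (C := ∑ k ∈ Finset.Icc (ι (min a b)) (ι (max a b)), ‖f k‖)
      measure_Ioc_lt_top.ne) hmeas (ae_restrict_of_forall_mem measurableSet_uIoc fun s hs => ?_)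
  have hs' := Set.uIoc_subset_uIcc hs
  exact Finset.single_le_sum (f := fun k => ‖f k‖) (fun _ _ => norm_nonneg _)
    (Finset.mem_Icc.2 ⟨hι hs'.1, hι hs'.2⟩)

theorem exists_nat_gridFloor_eq {h s : ℝ} {N : ℕ} (hh : 0 < h) (hs : s ∈ Set.Icc 0 (N * h)) :
    ∃ k : ℕ, k ≤ N ∧ gridFloor h s = k * h := by
  have hsh : s / h ∈ Set.Icc 0 (N : ℝ) := by
    rw [Set.mem_Icc, div_le_iff₀ hh]; exact ⟨div_nonneg hs.1 hh.le, hs.2⟩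
  refine ⟨⌊s / h⌋₊, Nat.floor_le_of_le hsh.2, ?_⟩
  rw [gridFloor, ← Int.natCast_floor_eq_floor hsh.1, mul_comm]
  norm_cast

theorem exists_nat_gridCeil_eq {h s : ℝ} {N : ℕ} (hh : 0 < h) (hs : s ∈ Set.Icc 0 (N * h)) :
    ∃ k : ℕ, k ≤ N ∧ gridCeil h s = k * h := by
  have hsh : s / h ∈ Set.Icc 0 (N : ℝ) := by
    rw [Set.mem_Icc, div_le_iff₀ hh]; exact ⟨div_nonneg hs.1 hh.le, hs.2⟩
  refine ⟨⌈s / h⌉₊, Nat.ceil_le.2 hsh.2, ?_⟩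
  rw [gridCeil, ← Int.natCast_ceil_eq_ceil hsh.1, mul_comm]
  norm_cast

theorem natCast_mul_mem_Icc {h : ℝ} {k N : ℕ} (hh : 0 ≤ h) (hk : k ≤ N) :
    (k * h : ℝ) ∈ Set.Icc 0 (N * h) :=
  ⟨by positivity, by gcongr⟩

section

variable {E : Type*} [NormedAddCommGroup E] {h : ℝ}

theorem intervalIntegrable_comp_gridFloor (hh : 0 ≤ h) (φ : ℝ → E) (a b : ℝ) :
    IntervalIntegrable (fun s => φ (gridFloor h s)) volume a b :=
  Monotone.intervalIntegrable_comp
    (fun _ _ hst => Int.floor_mono (div_le_div_of_nonneg_right hst hh))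
    (fun k : ℤ => φ (h * k)) a b

theorem intervalIntegrable_comp_gridCeil (hh : 0 ≤ h) (φ : ℝ → E) (a b : ℝ) :
    IntervalIntegrable (fun s => φ (gridCeil h s)) volume a b :=
  Monotone.intervalIntegrable_comp
    (fun _ _ hst => Int.ceil_mono (div_le_div_of_nonneg_right hst hh))
    (fun k : ℤ => φ (h * k)) a b

variable [NormedSpace ℝ E]

theorem intervalIntegrable_verlet_position (hh : 0 ≤ h) (w a : ℝ → E) (t₀ t₁ : ℝ) :
    IntervalIntegrable
      (fun s => w (gridFloor h s) - (s - gridFloor h s) • a (gridFloor h s)) volume t₀ t₁ := by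
  have := (intervalIntegrable_comp_gridFloor hh (fun r => w r + r • a r) t₀ t₁).sub
    ((intervalIntegrable_comp_gridFloor hh a t₀ t₁).continuousOn_smul continuousOn_id)
  refine this.congr fun s _ => ?_
  simp only [sub_smul, id]
  abel

theorem gridFloor_le (hh : 0 < h) (s : ℝ) : gridFloor h s ≤ s := by
  rw [gridFloor, ← le_div_iff₀' hh]
  exact Int.floor_le _

variable {N : ℕ} {a₁ a₂ : ℝ → E} {δ : ℝ}

theorem norm_verlet_velocity_sub_le (hh : 0 < h) {w₁ w₂ : ℝ → E} {v₁ v₂ : E}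
    (hw₁ : ∀ t, w₁ t = v₁ - (1/2 : ℝ) • ∫ s in (0:ℝ)..t,
      (a₁ (gridFloor h s) + a₁ (gridCeil h s)))
    (hw₂ : ∀ t, w₂ t = v₂ - (1/2 : ℝ) • ∫ s in (0:ℝ)..t,
      (a₂ (gridFloor h s) + a₂ (gridCeil h s)))
    (hδ : ∀ k : ℕ, k ≤ N → ‖a₁ (k * h) - a₂ (k * h)‖ ≤ δ)
    {t : ℝ} (ht : t ∈ Set.Icc 0 (N * h)) :
    ‖(w₁ t - w₂ t) - (v₁ - v₂)‖ ≤ δ * t := by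
  have hint : ∀ a : ℝ → E, IntervalIntegrable
      (fun s => a (gridFloor h s) + a (gridCeil h s)) volume 0 t := fun a =>
    (intervalIntegrable_comp_gridFloor hh.le a 0 t).add
      (intervalIntegrable_comp_gridCeil hh.le a 0 t)
  have hbound : ∀ s ∈ Set.uIoc 0 t,
      ‖(a₁ (gridFloor h s) + a₁ (gridCeil h s)) - (a₂ (gridFloor h s) + a₂ (gridCeil h s))‖
        ≤ 2 * δ := by
    intro s hs
    rw [Set.uIoc_of_le ht.1] at hs
    have hs' : s ∈ Set.Icc 0 (N * h) := ⟨hs.1.le, hs.2.trans ht.2⟩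
    obtain ⟨k, hkN, hk⟩ := exists_nat_gridFloor_eq hh hs'
    obtain ⟨l, hlN, hl⟩ := exists_nat_gridCeil_eq hh hs'
    calc _ = ‖(a₁ (k * h) - a₂ (k * h)) + (a₁ (l * h) - a₂ (l * h))‖ := by
            rw [hk, hl]; congr 1; abel
      _ ≤ δ + δ := norm_add_le_of_le (hδ k hkN) (hδ l hlN)
      _ = 2 * δ := by ring
  have hw : (w₁ t - w₂ t) - (v₁ - v₂) = -((1/2 : ℝ) • ∫ s in (0:ℝ)..t,
      ((a₁ (gridFloor h s) + a₁ (gridCeil h s)) - (a₂ (gridFloor h s) + a₂ (gridCeil h s)))) := by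
    rw [integral_sub (hint a₁) (hint a₂), hw₁, hw₂, smul_sub]
    abel
  rw [hw, norm_neg, norm_smul]
  have := norm_integral_le_of_norm_le_const hbound
  rw [sub_zero, abs_of_nonneg ht.1] at this
  calc ‖(1/2 : ℝ)‖ * _ ≤ 1/2 * (2 * δ * t) := by
        rw [Real.norm_of_nonneg (by norm_num)]; gcongr
    _ = δ * t := by ring

theorem norm_verlet_position_sub_le [CompleteSpace E] (hh : 0 < h) {w₁ w₂ q₁ q₂ : ℝ → E}
    {x₁ x₂ v₁ v₂ : E}
    (hq₁ : ∀ t, q₁ t = x₁ + ∫ s in (0:ℝ)..t,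
      (w₁ (gridFloor h s) - (s - gridFloor h s) • a₁ (gridFloor h s)))
    (hq₂ : ∀ t, q₂ t = x₂ + ∫ s in (0:ℝ)..t,
      (w₂ (gridFloor h s) - (s - gridFloor h s) • a₂ (gridFloor h s)))
    (hδa : ∀ k : ℕ, k ≤ N → ‖a₁ (k * h) - a₂ (k * h)‖ ≤ δ)
    (hδw : ∀ k : ℕ, k ≤ N → ‖(w₁ (k * h) - w₂ (k * h)) - (v₁ - v₂)‖ ≤ δ * (k * h))
    {t : ℝ} (ht : t ∈ Set.Icc 0 (N * h)) :
    ‖(q₁ t - q₂ t) - ((x₁ - x₂) + t • (v₁ - v₂))‖ ≤ δ * t ^ 2 / 2 := by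
  have hbound : ∀ s ∈ Set.Ioc 0 t,
      ‖(w₁ (gridFloor h s) - (s - gridFloor h s) • a₁ (gridFloor h s)) -
        (w₂ (gridFloor h s) - (s - gridFloor h s) • a₂ (gridFloor h s)) - (v₁ - v₂)‖
        ≤ δ * s := by
    intro s hs
    obtain ⟨k, hkN, hk⟩ := exists_nat_gridFloor_eq (s := s) hh ⟨hs.1.le, hs.2.trans ht.2⟩
    have hsk : 0 ≤ s - k * h := hk ▸ sub_nonneg.2 (gridFloor_le hh s)
    rw [hk]
    calc _ = ‖((w₁ (k * h) - w₂ (k * h)) - (v₁ - v₂)) -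
            (s - k * h) • (a₁ (k * h) - a₂ (k * h))‖ := by
          rw [smul_sub]; congr 1; abel
      _ ≤ δ * (k * h) + (s - k * h) * δ := by
          refine norm_sub_le_of_le (hδw k hkN) ?_
          rw [norm_smul, Real.norm_of_nonneg hsk]
          exact mul_le_mul_of_nonneg_left (hδa k hkN) hsk
      _ = δ * s := by ring
  have hint := fun (w : ℝ → E) a => intervalIntegrable_verlet_position hh.le w a 0 t
  have hq : (q₁ t - q₂ t) - ((x₁ - x₂) + t • (v₁ - v₂)) = ∫ s in (0:ℝ)..t,
      ((w₁ (gridFloor h s) - (s - gridFloor h s) • a₁ (gridFloor h s)) -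
        (w₂ (gridFloor h s) - (s - gridFloor h s) • a₂ (gridFloor h s)) - (v₁ - v₂)) := by
    rw [integral_sub ((hint w₁ a₁).sub (hint w₂ a₂)) intervalIntegrable_const,
      integral_sub (hint w₁ a₁) (hint w₂ a₂), intervalIntegral.integral_const, hq₁, hq₂,
      sub_zero]
    abel
  rw [hq]
  refine (intervalIntegral.norm_integral_le_of_norm_le ht.1 (Filter.Eventually.of_forall hbound)
    ((continuous_const_mul δ).intervalIntegrable 0 t)).trans_eq ?_
  rw [intervalIntegral.integral_const_mul, integral_id]
  ring

end

theorem norm_verlet_sub_le {E : Type*} [NormedAddCommGroup E] [NormedSpace ℝ E]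
    [CompleteSpace E]
    {h L M : ℝ} {N : ℕ} (hh : 0 < h) (hL : 0 ≤ L) {G : E → E}
    (hG : ∀ a b, ‖G a - G b‖ ≤ L * ‖a - b‖) {q w : E → E → ℝ → E}
    (hq : ∀ x v t, q x v t = x + ∫ s in (0:ℝ)..t,
      (w x v (gridFloor h s) - (s - gridFloor h s) • G (q x v (gridFloor h s))))
    (hw : ∀ x v t, w x v t = v - (1/2 : ℝ) • ∫ s in (0:ℝ)..t,
      (G (q x v (gridFloor h s)) + G (q x v (gridCeil h s))))
    (x y u v : E) (hM : ∀ k : ℕ, k ≤ N → ‖q x u (k * h) - q y v (k * h)‖ ≤ M)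
    {t : ℝ} (ht : t ∈ Set.Icc 0 (N * h)) :
    ‖q x u t - q y v t‖ ≤
      max ‖x - y‖ ‖x - y + (N * h) • (u - v)‖ + L * (N * h) ^ 2 / 2 * M := by
  have hG_grid : ∀ k : ℕ, k ≤ N →
      ‖G (q x u (k * h)) - G (q y v (k * h))‖ ≤ L * M := fun k hk =>
    (hG _ _).trans (mul_le_mul_of_nonneg_left (hM k hk) hL)
  have hdev := norm_verlet_position_sub_le (a₁ := fun r => G (q x u r))
    (a₂ := fun r => G (q y v r)) hh (hq x u) (hq y v) hG_grid
    (fun k hk => norm_verlet_velocity_sub_le (a₁ := fun r => G (q x u r))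
      (a₂ := fun r => G (q y v r)) hh (hw x u) (hw y v) hG_grid (natCast_mul_mem_Icc hh.le hk)) ht
  have hLM : 0 ≤ L * M := (norm_nonneg _).trans (hG_grid 0 (Nat.zero_le N))
  have ht2 : L * M * t ^ 2 / 2 ≤ L * (N * h) ^ 2 / 2 * M := by
    have : t ^ 2 ≤ (N * h) ^ 2 := pow_le_pow_left₀ ht.1 ht.2 2
    nlinarith
  calc ‖q x u t - q y v t‖
      ≤ ‖x - y + t • (u - v)‖ + ‖(q x u t - q y v t) - (x - y + t • (u - v))‖ :=
        norm_le_insert' _ _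
    _ ≤ max ‖x - y‖ ‖x - y + (N * h) • (u - v)‖ + L * (N * h) ^ 2 / 2 * M :=
        add_le_add (norm_add_smul_le_max _ _ ht) (hdev.trans ht2)

theorem le_one_add_mul_of_le_add_mul {a A m M X : ℝ} (ha : 0 ≤ a) (haA : 2 * a ≤ A)
    (hA : A ≤ 1) (hm : 0 ≤ m) (hM : M ≤ m + a * M) (hX : X ≤ m + a * M) :
    X ≤ (1 + A) * m := by
  have haM : a * M ≤ 2 * a * m := by
    rcases le_total M 0 with hM0 | hM0
    · nlinarith
    · nlinarith [mul_le_mul_of_nonneg_left hM ha, mul_nonneg ha hM0]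
  nlinarith

theorem verlet_apriori_stability_general {d : ℕ}
    (gradU : EuclideanSpace ℝ (Fin d) → EuclideanSpace ℝ (Fin d))
    (hess : EuclideanSpace ℝ (Fin d) →
      (EuclideanSpace ℝ (Fin d) →L[ℝ] EuclideanSpace ℝ (Fin d)))
    (L T h : ℝ) (N : ℕ)
    (hhess : ∀ x, HasFDerivAt gradU (hess x) x)
    (hL : ∀ x, ‖hess x‖ ≤ L)
    (hh : 0 < h) (hTh : T = N * h)
    (hsmall : L * (T^2 + T * h) ≤ 1/6)
    (q w : EuclideanSpace ℝ (Fin d) → EuclideanSpace ℝ (Fin d) → ℝ →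
      EuclideanSpace ℝ (Fin d))
    (hq : ∀ x v t, q x v t = x + ∫ s in (0:ℝ)..t,
      (w x v (gridFloor h s) - (s - gridFloor h s) • gradU (q x v (gridFloor h s))))
    (hw : ∀ x v t, w x v t = v - (1/2 : ℝ) • ∫ s in (0:ℝ)..t,
      (gradU (q x v (gridFloor h s)) + gradU (q x v (gridCeil h s))))
    (x y u v : EuclideanSpace ℝ (Fin d)) :
    ∀ s ∈ Set.Icc (0:ℝ) T,
      ‖q x u s - q y v s‖ ≤
        (1 + L * (T^2 + T * h)) * max ‖x - y‖ ‖x - y + T • (u - v)‖ := by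
  subst hTh
  have hL0 : 0 ≤ L := (norm_nonneg _).trans (hL 0)
  have hLip : ∀ a b, ‖gradU a - gradU b‖ ≤ L * ‖a - b‖ := fun a b =>
    convex_univ.norm_image_sub_le_of_norm_hasFDerivWithin_le
      (fun z _ => (hhess z).hasFDerivWithinAt) (fun z _ => hL z)
      (Set.mem_univ b) (Set.mem_univ a)
  set M := (Finset.range (N + 1)).sup' Finset.nonempty_range_add_one
    fun k : ℕ => ‖q x u (k * h) - q y v (k * h)‖
  have hM : ∀ k : ℕ, k ≤ N → ‖q x u (k * h) - q y v (k * h)‖ ≤ M := fun k hk =>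
    Finset.le_sup' (fun k : ℕ => ‖q x u (k * h) - q y v (k * h)‖)
      (Finset.mem_range_succ_iff.2 hk)
  have hdev := fun t ht => norm_verlet_sub_le hh hL0 hLip hq hw x y u v hM (t := t) ht
  have hM_self : M ≤ _ := Finset.sup'_le _ _ fun k hk =>
    hdev _ (natCast_mul_mem_Icc hh.le (Finset.mem_range_succ_iff.1 hk))
  intro s hs
  exact le_one_add_mul_of_le_add_mul (by positivity)
    (by nlinarith [mul_nonneg hL0 (by positivity : (0:ℝ) ≤ N * h * h)]) (by linarith)
    ((norm_nonneg _).trans (le_max_left _ _)) hM_self (hdev s hs)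

/-- A priori stability estimate for the velocity Verlet interpolation
(Lemma `apriori`, inequality (apriori:3)). The flows `q x v` and `w x v` are the
continuous-time interpolations of positions and velocities of velocity Verlet
with step size `h`, started at `(x, v)`. -/
theorem verlet_apriori_stability {d : ℕ}
    (U : EuclideanSpace ℝ (Fin d) → ℝ)
    (gradU : EuclideanSpace ℝ (Fin d) → EuclideanSpace ℝ (Fin d))
    (hess : EuclideanSpace ℝ (Fin d) →
      (EuclideanSpace ℝ (Fin d) →L[ℝ] EuclideanSpace ℝ (Fin d)))
    (L T h : ℝ) (N : ℕ)
    (hgrad : ∀ x, HasFDerivAt U ((innerSL ℝ) (gradU x)) x)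
    (hhess : ∀ x, HasFDerivAt gradU (hess x) x)
    (hL : ∀ x, ‖hess x‖ ≤ L)
    (hT : 0 < T) (hh : 0 < h) (hN : 0 < N) (hTh : T = N * h)
    (hsmall : L * (T^2 + T * h) ≤ 1/6)
    (q w : EuclideanSpace ℝ (Fin d) → EuclideanSpace ℝ (Fin d) → ℝ →
      EuclideanSpace ℝ (Fin d))
    (hq : ∀ x v t, q x v t = x + ∫ s in (0:ℝ)..t,
      (w x v (gridFloor h s) - (s - gridFloor h s) • gradU (q x v (gridFloor h s))))
    (hw : ∀ x v t, w x v t = v - (1/2 : ℝ) • ∫ s in (0:ℝ)..t,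
      (gradU (q x v (gridFloor h s)) + gradU (q x v (gridCeil h s))))
    (x y u v : EuclideanSpace ℝ (Fin d)) :
    ∀ s ∈ Set.Icc (0:ℝ) T,
      ‖q x u s - q y v s‖ ≤
        (1 + L * (T^2 + T * h)) * max ‖x - y‖ ‖x - y + T • (u - v)‖ :=
  verlet_apriori_stability_general gradU hess L T h N hhess hL hh hTh hsmall q w hq hw x y u v
end

section
/- Suppose U has a global minimum at 0 with U(0) = 0, U ∈ C³(ℝ^d), ‖D²U‖ ≤ L, ‖D³U‖ ≤ L_H, L(T² + Th) ≤ 1/6, T/h ∈ ℕ. For x, y, v ∈ ℝ^d, let Φ(v) be the unique velocity such that q̃_T(x,v) = q̃_T(y, Φ(v)) (Verlet flows with same endpoint). Then T‖Φ(v) − v‖ ≤ (3/2)‖x − y‖. -/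
/-!
At grid times `kh` the interpolation is velocity Verlet, and unrolling it gives
`q̃_{kh}(x, v) = x + kh v - (h²/2) Σ_{j<k} (Σ_{i<j} (g_i + g_{i+1}) + g_j)`
with `g_i = ∇U(q̃_{ih})`, the discrete form of the Duhamel representation. For the difference
`e_k` of the two trajectories this double sum has `k²` gradient differences, each at most
`L ‖e_i‖`, so `L T² ≤ 1/6` propagates the a priori bound
`‖e_k‖ ≤ C := (12/11)(‖x - y‖ + T‖v - Φ v‖)` by induction on `k`. Since `e_N = 0`,
`T‖v - Φ v‖ ≤ ‖x - y‖ + C/12`, that is `T‖v - Φ v‖ ≤ (6/5)‖x - y‖`.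
-/

open MeasureTheory intervalIntegral

open Finset

theorem gridFloor_eq_of_mem_Ico {h s : ℝ} (hh : 0 < h) {j : ℤ}
    (hs : s ∈ Set.Ico (j * h) ((j + 1) * h)) : gridFloor h s = j * h := by
  have : ⌊s / h⌋ = j := Int.floor_eq_iff.2
    ⟨(le_div_iff₀ hh).2 hs.1, (div_lt_iff₀ hh).2 hs.2⟩
  rw [gridFloor, this, mul_comm]

theorem gridCeil_eq_of_mem_Ioc {h s : ℝ} (hh : 0 < h) {j : ℤ}
    (hs : s ∈ Set.Ioc (j * h) ((j + 1) * h)) : gridCeil h s = (j + 1) * h := by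
  have : ⌈s / h⌉ = j + 1 := Int.ceil_eq_iff.2
    ⟨by simpa using (lt_div_iff₀ hh).2 hs.1, by push_cast; exact (div_le_iff₀ hh).2 hs.2⟩
  rw [gridCeil, this, mul_comm]; push_cast; ring

section Integral

variable {E : Type*} [NormedAddCommGroup E] [NormedSpace ℝ E]

theorem integral_zero_natCast_mul_eq_sum {f : ℝ → E} {g : ℕ → ℝ → E} {h : ℝ} (hh : 0 ≤ h)
    (hg : ∀ j, Continuous (g j))
    (hfg : ∀ j : ℕ, Set.EqOn f (g j) (Set.Ioo (j * h) ((j + 1) * h))) (k : ℕ) :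
    ∫ s in 0..k * h, f s = ∑ j ∈ range k, ∫ s in j * h..(j + 1) * h, g j s := by
  have hle (j : ℕ) : (j : ℝ) * h ≤ (j + 1) * h := by nlinarith
  have hint (j : ℕ) : IntervalIntegrable f volume (j * h) ((j + 1) * h) :=
    ((hg j).intervalIntegrable _ _).congr_uIoo (Set.uIoo_of_le (hle j) ▸ (hfg j).symm)
  have := sum_integral_adjacent_intervals (a := fun n : ℕ => (n : ℝ) * h) (μ := volume)
    (n := k) (f := f) fun j _ => by push_cast; exact hint j
  push_cast at this
  rw [zero_mul] at this
  rw [← this]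
  exact sum_congr rfl fun j _ => integral_congr_Ioo_of_le (hle j) (hfg j)

theorem integral_const_sub_sub_smul_const [CompleteSpace E] (c c' : E) (a b : ℝ) :
    ∫ s in a..b, (c - (s - a) • c') = (b - a) • c - ((b - a) ^ 2 / 2) • c' := by
  have hc : Continuous fun s : ℝ => (s - a) • c' := by fun_prop
  rw [integral_sub intervalIntegrable_const (hc.intervalIntegrable a b),
    intervalIntegral.integral_const, intervalIntegral.integral_smul_const,
    integral_comp_sub_right (fun t : ℝ => t), integral_id]
  congr 2
  ring

end Integral

def verletSum {E : Type*} [AddCommMonoid E] (F : ℕ → E) (k : ℕ) : E :=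
  ∑ j ∈ range k, (∑ i ∈ range j, (F i + F (i + 1)) + F j)

theorem verletSum_sub {E : Type*} [AddCommGroup E] (F G : ℕ → E) (k : ℕ) :
    verletSum (fun i => F i - G i) k = verletSum F k - verletSum G k := by
  simp only [verletSum, sum_add_distrib, sum_sub_distrib]
  abel

section Norm

variable {E : Type*} [SeminormedAddCommGroup E]

theorem norm_verletSum_le {F : ℕ → E} {M : ℝ} {k : ℕ} (hF : ∀ i < k, ‖F i‖ ≤ M) :
    ‖verletSum F k‖ ≤ k ^ 2 * M := by
  have hterm : ∀ j ∈ range k, ‖∑ i ∈ range j, (F i + F (i + 1)) + F j‖ ≤ (2 * j + 1) * M := by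
    intro j hj
    have hjk := mem_range.1 hj
    calc _ ≤ ∑ i ∈ range j, (‖F i‖ + ‖F (i + 1)‖) + ‖F j‖ :=
          norm_add_le_of_le ((norm_sum_le _ _).trans (sum_le_sum fun i _ => norm_add_le _ _))
            le_rfl
      _ ≤ ∑ i ∈ range j, (M + M) + M := by
          gcongr with i hi
          · exact hF i (by have := mem_range.1 hi; omega)
          · exact hF (i + 1) (by have := mem_range.1 hi; omega)
          · exact hF j hjk
      _ = (2 * j + 1) * M := by simp only [sum_const, card_range, nsmul_eq_mul]; ring
  calc ‖verletSum F k‖ ≤ ∑ j ∈ range k, (2 * j + 1) * M :=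
        (norm_sum_le _ _).trans (sum_le_sum hterm)
    _ = k ^ 2 * M :=
        sum_range_induction _ (fun n => (n : ℝ) ^ 2 * M) (by simp) k fun n _ => by push_cast; ring

end Norm

section Discrete

variable {E : Type*} [SeminormedAddCommGroup E] [NormedSpace ℝ E] {e G : ℕ → E} {δ Δ : E}
  {h L C : ℝ} {N : ℕ}

theorem norm_smul_verletSum_le (hG : ∀ i, ‖G i‖ ≤ L * ‖e i‖) (hL : 0 ≤ L) (hh : 0 ≤ h)
    (hC : 0 ≤ C) {k : ℕ} (hk : k ≤ N) (he : ∀ i < k, ‖e i‖ ≤ C) :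
    ‖(h ^ 2 / 2) • verletSum G k‖ ≤ L * (N * h) ^ 2 / 2 * C := by
  have hsum := norm_verletSum_le fun i hi =>
    (hG i).trans (mul_le_mul_of_nonneg_left (he i hi) hL)
  rw [norm_smul, Real.norm_of_nonneg (by positivity)]
  calc h ^ 2 / 2 * ‖verletSum G k‖ ≤ h ^ 2 / 2 * (k ^ 2 * (L * C)) := by gcongr
    _ = L * (k * h) ^ 2 / 2 * C := by ring
    _ ≤ L * (N * h) ^ 2 / 2 * C := by gcongr

variable (he : ∀ k : ℕ, e k = δ + (k * h) • Δ - (h ^ 2 / 2) • verletSum G k)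
  (hG : ∀ i, ‖G i‖ ≤ L * ‖e i‖) (hL : 0 ≤ L) (hh : 0 ≤ h)
include he hG hL hh

theorem norm_le_of_eq_verletSum (hC0 : 0 ≤ C)
    (hC : ‖δ‖ + N * h * ‖Δ‖ + L * (N * h) ^ 2 / 2 * C ≤ C) : ∀ k ≤ N, ‖e k‖ ≤ C := by
  intro k
  induction k using Nat.strong_induction_on with
  | _ k ih =>
    intro hk
    calc ‖e k‖ ≤ ‖δ‖ + k * h * ‖Δ‖ + ‖(h ^ 2 / 2) • verletSum G k‖ := by
          rw [he k]
          refine norm_sub_le_of_le ((norm_add_le _ _).trans_eq ?_) le_rfl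
          rw [norm_smul, Real.norm_of_nonneg (by positivity)]
      _ ≤ ‖δ‖ + N * h * ‖Δ‖ + L * (N * h) ^ 2 / 2 * C := by
          gcongr
          exact norm_smul_verletSum_le hG hL hh hC0 hk fun i hi => ih i hi (by omega)
      _ ≤ C := hC

theorem mul_norm_le_of_eq_verletSum_of_eq_zero (hLT : L * (N * h) ^ 2 ≤ 1 / 6) (hN : e N = 0) :
    N * h * ‖Δ‖ ≤ 6 / 5 * ‖δ‖ := by
  set C := 12 / 11 * (‖δ‖ + N * h * ‖Δ‖) with hC
  have hC0 : 0 ≤ C := by positivity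
  have hθC : L * (N * h) ^ 2 / 2 * C ≤ C / 12 := by nlinarith
  have hbound := norm_le_of_eq_verletSum (N := N) he hG hL hh hC0 (by linarith [hC])
  have hend : (N * h) • Δ = (h ^ 2 / 2) • verletSum G N - δ := by
    have := he N
    rw [hN] at this
    linear_combination (norm := module) -this
  have : N * h * ‖Δ‖ ≤ C / 12 + ‖δ‖ :=
    calc N * h * ‖Δ‖ = ‖(N * h) • Δ‖ := by rw [norm_smul, Real.norm_of_nonneg (by positivity)]
      _ ≤ ‖(h ^ 2 / 2) • verletSum G N‖ + ‖δ‖ := hend ▸ norm_sub_le _ _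
      _ ≤ C / 12 + ‖δ‖ := by
          gcongr
          exact (norm_smul_verletSum_le hG hL hh hC0 le_rfl fun i hi => hbound i hi.le).trans hθC
  linarith [hC]

end Discrete

section Verlet

variable {E : Type*} [NormedAddCommGroup E] [NormedSpace ℝ E] [CompleteSpace E]
  {g : E → E} {h : ℝ} {x v : E} {q w : ℝ → E}

theorem verlet_velocity_grid (hh : 0 < h)
    (hw : ∀ t, w t = v - (1 / 2 : ℝ) • ∫ s in (0 : ℝ)..t,
      (g (q (gridFloor h s)) + g (q (gridCeil h s)))) (k : ℕ) :
    w (k * h) = v - (h / 2) • ∑ j ∈ range k, (g (q (j * h)) + g (q ((j + 1) * h))) := by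
  rw [hw, integral_zero_natCast_mul_eq_sum hh.le
    (g := fun j _ => g (q (j * h)) + g (q ((j + 1) * h))) (fun _ => continuous_const)
    fun j s hs => by
      have hs' : s ∈ Set.Ioo ((j : ℤ) * h) (((j : ℤ) + 1) * h) := by exact_mod_cast hs
      simp only [gridFloor_eq_of_mem_Ico hh (Set.Ioo_subset_Ico_self hs'),
        gridCeil_eq_of_mem_Ioc hh (Set.Ioo_subset_Ioc_self hs'), Int.cast_natCast]]
  simp only [intervalIntegral.integral_const, add_sub_cancel_left, add_mul, one_mul, ← smul_sum,
    smul_smul]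
  ring_nf

theorem verlet_position_grid_eq_sum (hh : 0 < h)
    (hq : ∀ t, q t = x + ∫ s in (0 : ℝ)..t,
      (w (gridFloor h s) - (s - gridFloor h s) • g (q (gridFloor h s)))) (k : ℕ) :
    q (k * h) = x + ∑ j ∈ range k, (h • w (j * h) - (h ^ 2 / 2) • g (q (j * h))) := by
  rw [hq, integral_zero_natCast_mul_eq_sum hh.le
    (g := fun j s => w (j * h) - (s - j * h) • g (q (j * h))) (fun _ => by fun_prop)
    fun j s hs => by
      have hs' : s ∈ Set.Ico ((j : ℤ) * h) (((j : ℤ) + 1) * h) := by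
        exact_mod_cast Set.Ioo_subset_Ico_self hs
      simp only [gridFloor_eq_of_mem_Ico hh hs', Int.cast_natCast]]
  simp only [integral_const_sub_sub_smul_const, add_mul, one_mul, add_sub_cancel_left]

theorem verlet_position_grid (hh : 0 < h)
    (hq : ∀ t, q t = x + ∫ s in (0 : ℝ)..t,
      (w (gridFloor h s) - (s - gridFloor h s) • g (q (gridFloor h s))))
    (hw : ∀ t, w t = v - (1 / 2 : ℝ) • ∫ s in (0 : ℝ)..t,
      (g (q (gridFloor h s)) + g (q (gridCeil h s)))) (k : ℕ) :
    q (k * h) = x + (k * h) • v - (h ^ 2 / 2) • verletSum (fun i => g (q (i * h))) k := by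
  have hstep (j : ℕ) : h • w (j * h) - (h ^ 2 / 2) • g (q (j * h)) = h • v - (h ^ 2 / 2) •
      (∑ i ∈ range j, (g (q (i * h)) + g (q ((i + 1 : ℕ) * h))) + g (q (j * h))) := by
    rw [verlet_velocity_grid hh hw]
    push_cast
    module
  rw [verlet_position_grid_eq_sum hh hq, sum_congr rfl fun j _ => hstep j, sum_sub_distrib,
    sum_const, card_range, ← Nat.cast_smul_eq_nsmul ℝ, smul_smul, ← smul_sum, verletSum]
  push_cast
  abel

end Verlet

theorem oneshot_velocity_bound_general {d : ℕ}
    (gradU : EuclideanSpace ℝ (Fin d) → EuclideanSpace ℝ (Fin d))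
    (hess : EuclideanSpace ℝ (Fin d) →
      (EuclideanSpace ℝ (Fin d) →L[ℝ] EuclideanSpace ℝ (Fin d)))
    (L T h : ℝ) (N : ℕ)
    (hhess : ∀ x, HasFDerivAt gradU (hess x) x)
    (hL : ∀ x, ‖hess x‖ ≤ L)
    (hh : 0 < h) (hTh : T = N * h)
    (hsmall : L * (T^2 + T * h) ≤ 1/6)
    (q w : EuclideanSpace ℝ (Fin d) → EuclideanSpace ℝ (Fin d) → ℝ →
      EuclideanSpace ℝ (Fin d))
    (hq : ∀ x v t, q x v t = x + ∫ s in (0:ℝ)..t,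
      (w x v (gridFloor h s) - (s - gridFloor h s) • gradU (q x v (gridFloor h s))))
    (hw : ∀ x v t, w x v t = v - (1/2 : ℝ) • ∫ s in (0:ℝ)..t,
      (gradU (q x v (gridFloor h s)) + gradU (q x v (gridCeil h s))))
    (x y : EuclideanSpace ℝ (Fin d))
    (Φ : EuclideanSpace ℝ (Fin d) → EuclideanSpace ℝ (Fin d))
    (hΦ : ∀ v, q x v T = q y (Φ v) T) :
    ∀ v, T * ‖Φ v - v‖ ≤ (3/2) * ‖x - y‖ := by
  intro v
  have hL0 : 0 ≤ L := (norm_nonneg _).trans (hL 0)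
  have hlip (a b) : ‖gradU a - gradU b‖ ≤ L * ‖a - b‖ :=
    convex_univ.norm_image_sub_le_of_norm_hasFDerivWithin_le
      (fun p _ => (hhess p).hasFDerivWithinAt) (fun p _ => hL p) trivial trivial
  have hpos (z u : EuclideanSpace ℝ (Fin d)) (k : ℕ) :=
    verlet_position_grid hh (hq z u) (hw z u) k
  have hT0 : 0 ≤ T := hTh ▸ by positivity
  have hLT : L * (N * h) ^ 2 ≤ 1 / 6 := by
    rw [← hTh]; nlinarith [mul_nonneg (mul_nonneg hL0 hT0) hh.le]
  have key := mul_norm_le_of_eq_verletSum_of_eq_zero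
    (e := fun k => q x v (k * h) - q y (Φ v) (k * h)) (δ := x - y) (Δ := v - Φ v) (N := N)
    (fun k => by rw [hpos x v k, hpos y (Φ v) k, verletSum_sub]; module)
    (fun i => hlip _ _) hL0 hh.le hLT (by simp only [← hTh, hΦ v, sub_self])
  rw [norm_sub_rev, hTh]
  linarith [norm_nonneg (x - y)]

/-- One-shot coupling bound for the velocity matching map `Φ` defined by
`q̃_T(x,v) = q̃_T(y, Φ(v))` (Lemma `oneshot:1:a`): `T‖Φ(v) − v‖ ≤ (3/2)‖x − y‖`. -/
theorem oneshot_velocity_bound {d : ℕ}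
    (U : EuclideanSpace ℝ (Fin d) → ℝ)
    (gradU : EuclideanSpace ℝ (Fin d) → EuclideanSpace ℝ (Fin d))
    (hess : EuclideanSpace ℝ (Fin d) →
      (EuclideanSpace ℝ (Fin d) →L[ℝ] EuclideanSpace ℝ (Fin d)))
    (L LH T h : ℝ) (N : ℕ)
    (hmin : ∀ x, U 0 ≤ U x) (hU0 : U 0 = 0)
    (hgrad : ∀ x, HasFDerivAt U ((innerSL ℝ) (gradU x)) x)
    (hhess : ∀ x, HasFDerivAt gradU (hess x) x)
    (hL : ∀ x, ‖hess x‖ ≤ L)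
    (hLH : ∀ x y, ‖hess x - hess y‖ ≤ LH * ‖x - y‖)
    (hT : 0 < T) (hh : 0 < h) (hN : 0 < N) (hTh : T = N * h)
    (hsmall : L * (T^2 + T * h) ≤ 1/6)
    (q w : EuclideanSpace ℝ (Fin d) → EuclideanSpace ℝ (Fin d) → ℝ →
      EuclideanSpace ℝ (Fin d))
    (hq : ∀ x v t, q x v t = x + ∫ s in (0:ℝ)..t,
      (w x v (gridFloor h s) - (s - gridFloor h s) • gradU (q x v (gridFloor h s))))
    (hw : ∀ x v t, w x v t = v - (1/2 : ℝ) • ∫ s in (0:ℝ)..t,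
      (gradU (q x v (gridFloor h s)) + gradU (q x v (gridCeil h s))))
    (x y : EuclideanSpace ℝ (Fin d))
    (Φ : EuclideanSpace ℝ (Fin d) → EuclideanSpace ℝ (Fin d))
    (hΦ : ∀ v, q x v T = q y (Φ v) T) :
    ∀ v, T * ‖Φ v - v‖ ≤ (3/2) * ‖x - y‖ :=
  oneshot_velocity_bound_general gradU hess L T h N hhess hL hh hTh hsmall q w hq hw x y Φ hΦ
end
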